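/- Let Φ be a type of network parameters, S₁ and S₂ two types of summary statistics, f₁ : Φ → S₁ and f₂ : Φ → S₂ the maps sending parameters to the expected simulated statistics, and a₁ ∈ S₁, a₂ ∈ S₂ the expected statistics of the recorded data. Let d₁ : S₁ → S₁ → ℝ and d₂ : S₂ → S₂ → ℝ be dissimilarity functions such that there exist m₁, m₂ ∈ ℝ with m₁ ≤ d₁ x y for all x, y and d₁ x y = m₁ ↔ x = y, and likewise m₂ ≤ d₂ x y for all x, y with d₂ x y = m₂ ↔ x = y. Let μ₁, μ₂ > 0 be real constants and define L(φ) = μ₁ · d₁(a₁, f₁(φ)) + μ₂ · d₂(a₂, f₂(φ)). If there exists φ° ∈ Φ with f₁(φ°) = a₁ and f₂(φ°) = a₂, then for every φ ∈ Φ: φ is a global minimizer of L if and only if f₁(φ) = a₁ and f₂(φ) = a₂. -/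
import Mathlib


/-- Property 2: combining two sample-and-measure losses with positive weights,
a parameter is a global minimizer iff both expected statistics match the data. -/
theorem stmt_1 {Φ S₁ S₂ : Type*} (f₁ : Φ → S₁) (f₂ : Φ → S₂) (a₁ : S₁) (a₂ : S₂)
    (d₁ : S₁ → S₁ → ℝ) (d₂ : S₂ → S₂ → ℝ) (m₁ m₂ : ℝ)
    (hd₁_lb : ∀ x y : S₁, m₁ ≤ d₁ x y) (hd₁_eq : ∀ x y : S₁, d₁ x y = m₁ ↔ x = y)
    (hd₂_lb : ∀ x y : S₂, m₂ ≤ d₂ x y) (hd₂_eq : ∀ x y : S₂, d₂ x y = m₂ ↔ x = y)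
    (μ₁ μ₂ : ℝ) (hμ₁ : 0 < μ₁) (hμ₂ : 0 < μ₂)
    (L : Φ → ℝ) (hL : ∀ φ : Φ, L φ = μ₁ * d₁ a₁ (f₁ φ) + μ₂ * d₂ a₂ (f₂ φ))
    (hexists : ∃ φ0 : Φ, f₁ φ0 = a₁ ∧ f₂ φ0 = a₂) :
    ∀ φ : Φ, (∀ φ' : Φ, L φ ≤ L φ') ↔ (f₁ φ = a₁ ∧ f₂ φ = a₂) := by
  obtain ⟨φ0, h01, h02⟩ := hexists
  have hL0 : L φ0 = μ₁ * m₁ + μ₂ * m₂ := by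
    rw [hL, h01, h02, (hd₁_eq a₁ a₁).mpr rfl, (hd₂_eq a₂ a₂).mpr rfl]
  intro φ
  constructor
  · intro hmin
    have h := hmin φ0
    rw [hL0, hL] at h
    have h1 := hd₁_lb a₁ (f₁ φ)
    have h2 := hd₂_lb a₂ (f₂ φ)
    have e1 : d₁ a₁ (f₁ φ) = m₁ := by nlinarith
    have e2 : d₂ a₂ (f₂ φ) = m₂ := by nlinarith
    exact ⟨((hd₁_eq _ _).mp e1).symm, ((hd₂_eq _ _).mp e2).symm⟩
  · rintro ⟨h1, h2⟩ φ'
    have : L φ = μ₁ * m₁ + μ₂ * m₂ := by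
      rw [hL, h1, h2, (hd₁_eq a₁ a₁).mpr rfl, (hd₂_eq a₂ a₂).mpr rfl]
    rw [this, hL]
    have := hd₁_lb a₁ (f₁ φ')
    have := hd₂_lb a₂ (f₂ φ')
    nlinarith
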